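/- arXiv:1307.7585 — 9 statements merged into one kernel-verified Lean document; each statement's English description precedes it below -/
import Mathlib

section
/- If u : ℝ → ℝ is smooth with u̇(x) ≠ 0 for all x and satisfies u̇·u⃛ - (3/2)ü² = 0, then the function I₂(x) = u(x)·ü(x)²/(2·u̇(x)³) - ü(x)/u̇(x) is constant. -/
theorem stmt_2 (u : ℝ → ℝ) (hu : ContDiff ℝ (⊤ : ℕ∞) u)
    (hne : ∀ x, deriv u x ≠ 0)
    (hode : ∀ x, deriv u x * deriv (deriv (deriv u)) x
      = (3 / 2) * (deriv (deriv u) x) ^ 2) :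
    ∀ x : ℝ,
      deriv (fun x => u x * (deriv (deriv u) x) ^ 2 / (2 * (deriv u x) ^ 3)
        - deriv (deriv u) x / deriv u x) x = 0 := by
  have hu0 : ContDiff ℝ (⊤ : ℕ∞) u := hu.of_le (by simp)
  have hu1 : ContDiff ℝ (⊤ : ℕ∞) (deriv u) := (contDiff_infty_iff_deriv.mp hu0).2
  have hu2 : ContDiff ℝ (⊤ : ℕ∞) (deriv (deriv u)) := (contDiff_infty_iff_deriv.mp hu1).2
  intro x
  have h0 : HasDerivAt u (deriv u x) x := (hu0.differentiable (by simp) x).hasDerivAt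
  have h1 : HasDerivAt (deriv u) (deriv (deriv u) x) x :=
    (hu1.differentiable (by simp) x).hasDerivAt
  have h2 : HasDerivAt (deriv (deriv u)) (deriv (deriv (deriv u)) x) x :=
    (hu2.differentiable (by simp) x).hasDerivAt
  have hN := h0.mul (h2.pow 2)
  have hD := (h1.pow 3).const_mul (2 : ℝ)
  have hden : 2 * (deriv u x) ^ 3 ≠ 0 := by
    have := hne x; positivity
  have hA := hN.div hD hden
  have hB := h2.div h1 (hne x)
  rw [show deriv (fun x => u x * (deriv (deriv u) x) ^ 2 / (2 * (deriv u x) ^ 3)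
        - deriv (deriv u) x / deriv u x) x = _ from (hA.sub hB).deriv]
  simp only [Pi.mul_apply, Pi.pow_apply]
  have hO := hode x
  have ha1 := hne x
  have ha3 : deriv (deriv (deriv u)) x = 3 * (deriv (deriv u) x) ^ 2 / (2 * deriv u x) := by
    field_simp
    linarith
  rw [ha3]
  field_simp
  ring
end

section
/- If u : ℝ → ℝ is smooth with u̇ never zero, satisfies u̇·u⃛ = (3/2)ü², and additionally ü(x₀) = 0 at some point x₀, then ü vanishes identically, i.e., u is affine: u(x) = C₁x + C₂ for some constants. -/
theorem stmt_4 (u : ℝ → ℝ) (hu : ContDiff ℝ (⊤ : ℕ∞) u)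
    (hne : ∀ x, deriv u x ≠ 0)
    (hode : ∀ x, deriv u x * deriv (deriv (deriv u)) x
      = (3 / 2) * (deriv (deriv u) x) ^ 2)
    (x₀ : ℝ) (h₀ : deriv (deriv u) x₀ = 0) :
    ∃ C₁ C₂ : ℝ, ∀ x, u x = C₁ * x + C₂ := by
  have hu' : ContDiff ℝ (⊤ : ℕ∞) u := hu.of_le (by simp)
  have hd1 : ContDiff ℝ (⊤ : ℕ∞) (deriv u) := (contDiff_infty_iff_deriv.mp hu').2
  have hd2 : ContDiff ℝ (⊤ : ℕ∞) (deriv (deriv u)) := (contDiff_infty_iff_deriv.mp hd1).2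
  set g : ℝ → ℝ := fun x => (deriv (deriv u) x) ^ 2 / (deriv u x) ^ 3 with hg_def
  have hg : ∀ x, HasDerivAt g 0 x := by
    intro x
    have h1 : HasDerivAt (deriv u) (deriv (deriv u) x) x :=
      (hd1.differentiable (by norm_num) x).hasDerivAt
    have h2 : HasDerivAt (deriv (deriv u)) (deriv (deriv (deriv u)) x) x :=
      (hd2.differentiable (by norm_num) x).hasDerivAt
    have hnum : HasDerivAt (fun y => (deriv (deriv u) y) ^ 2)
        (2 * deriv (deriv u) x * deriv (deriv (deriv u)) x) x := by
      have := h2.pow 2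
      exact this.congr_deriv (by norm_num <;> ring)
    have hden : HasDerivAt (fun y => (deriv u y) ^ 3)
        (3 * (deriv u x) ^ 2 * deriv (deriv u) x) x := by
      have := h1.pow 3
      exact this.congr_deriv (by norm_num <;> ring)
    have hdiv := hnum.div hden (pow_ne_zero 3 (hne x))
    refine hdiv.congr_deriv ?_
    rw [div_eq_zero_iff]
    left
    linear_combination (2 * deriv (deriv u) x * (deriv u x) ^ 2) * hode x
  have hgconst : ∀ x, g x = g x₀ := by
    intro x
    exact is_const_of_deriv_eq_zero (fun y => (hg y).differentiableAt)
      (fun y => (hg y).deriv) x x₀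
  have hg0 : ∀ x, g x = 0 := by
    intro x
    rw [hgconst x]
    simp [hg_def, h₀]
  have hdd0 : ∀ x, deriv (deriv u) x = 0 := by
    intro x
    have h2 : (deriv (deriv u) x) ^ 2 / (deriv u x) ^ 3 = 0 := hg0 x
    rcases div_eq_zero_iff.mp h2 with h | h
    · exact pow_eq_zero_iff two_ne_zero |>.mp h
    · exact absurd (pow_eq_zero_iff three_ne_zero |>.mp h) (hne x)
  have hconst1 : ∀ x, deriv u x = deriv u 0 :=
    fun x => is_const_of_deriv_eq_zero (hd1.differentiable (by norm_num)) hdd0 x 0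
  refine ⟨deriv u 0, u 0, fun x => ?_⟩
  have hw : ∀ y, HasDerivAt (fun z => u z - deriv u 0 * z) 0 y := by
    intro y
    have h1 : HasDerivAt u (deriv u y) y := (hu'.differentiable (by norm_num) y).hasDerivAt
    have h2 : HasDerivAt (fun z => deriv u 0 * z) (deriv u 0) y := by
      simpa using (hasDerivAt_id y).const_mul (deriv u 0)
    have := h1.sub h2
    rw [hconst1 y] at this
    exact this.congr_deriv (by simp)
  have := is_const_of_deriv_eq_zero (f := fun z => u z - deriv u 0 * z)
    (fun y => (hw y).differentiableAt) (fun y => (hw y).deriv) x 0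
  simp at this
  linarith
end

section
/- The sequence u(m) = 1/(C₁m + C₂) + C₃ with C₁ ≠ 0 and C₁m + C₂ ≠ 0 for all relevant m satisfies the discrete equation (u(m+3) - u(m+1))(u(m+2) - u(m)) = 4·(u(m+3) - u(m+2))(u(m+1) - u(m)) for all m. -/
theorem stmt_9 (C₁ C₂ C₃ : ℝ) (hC₁ : C₁ ≠ 0)
    (hne : ∀ m : ℤ, C₁ * (m : ℝ) + C₂ ≠ 0)
    (u : ℤ → ℝ) (hu : ∀ m : ℤ, u m = 1 / (C₁ * (m : ℝ) + C₂) + C₃) :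
    ∀ m : ℤ, (u (m + 3) - u (m + 1)) * (u (m + 2) - u m)
      = 4 * ((u (m + 3) - u (m + 2)) * (u (m + 1) - u m)) := by
  intro m
  have h0 := hne m
  have h1 := hne (m + 1)
  have h2 := hne (m + 2)
  have h3 := hne (m + 3)
  rw [hu m, hu (m + 1), hu (m + 2), hu (m + 3)]
  push_cast at h1 h2 h3 ⊢
  field_simp
  ring
end

section
/- If u : ℤ → ℝ is a strictly monotone sequence satisfying (u(m+3)-u(m+1))(u(m+2)-u(m)) = 4(u(m+3)-u(m+2))(u(m+1)-u(m)) for all m, then the quantity J₁(m) = 4/(u(m+2)-u(m)) - 1/(u(m+2)-u(m+1)) - 1/(u(m+1)-u(m)) is independent of m. -/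
theorem stmt_11 (u : ℤ → ℝ) (hmono : StrictMono u)
    (hscheme : ∀ m : ℤ, (u (m + 3) - u (m + 1)) * (u (m + 2) - u m)
      = 4 * ((u (m + 3) - u (m + 2)) * (u (m + 1) - u m))) :
    ∀ m : ℤ,
      4 / (u (m + 1 + 2) - u (m + 1)) - 1 / (u (m + 1 + 2) - u (m + 1 + 1))
        - 1 / (u (m + 1 + 1) - u (m + 1))
      = 4 / (u (m + 2) - u m) - 1 / (u (m + 2) - u (m + 1))
        - 1 / (u (m + 1) - u m) := by
  intro m
  have h := hscheme m
  have ha : 0 < u (m + 1) - u m := sub_pos.2 (hmono (by omega))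
  have hb : 0 < u (m + 2) - u (m + 1) := sub_pos.2 (hmono (by omega))
  have hc : 0 < u (m + 3) - u (m + 2) := sub_pos.2 (hmono (by omega))
  have hab : 0 < u (m + 2) - u m := by linarith
  have hbc : 0 < u (m + 3) - u (m + 1) := by linarith
  have e1 : m + 1 + 2 = m + 3 := by ring
  have e2 : m + 1 + 1 = m + 2 := by ring
  rw [e1, e2]
  have hA : 4 / (u (m + 3) - u (m + 1))
      = (u (m + 2) - u m) / ((u (m + 3) - u (m + 2)) * (u (m + 1) - u m)) := by
    rw [div_eq_div_iff hbc.ne' (mul_pos hc ha).ne']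
    linarith [h]
  have hB : 4 / (u (m + 2) - u m)
      = (u (m + 3) - u (m + 1)) / ((u (m + 3) - u (m + 2)) * (u (m + 1) - u m)) := by
    rw [div_eq_div_iff hab.ne' (mul_pos hc ha).ne']
    linarith [h]
  rw [hA, hB]
  field_simp
  ring
end

section
/- If u : ℤ → ℝ is strictly monotone and satisfies the K=4 cross-ratio scheme, then J₂(m) = 4·u(m+2)/(u(m+2)-u(m)) - u(m+1)/(u(m+2)-u(m+1)) - u(m+1)/(u(m+1)-u(m)) - 2 is independent of m. -/
noncomputable def firstIntegralJ₂ {K : Type*} [Field K] (a b c : K) : K :=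
  4 * c / (c - a) - b / (c - b) - b / (b - a) - 2

/-- Cleared of denominators, `J₂(b, c, d) - J₂(a, b, c)` is `(c - b) (a d - b c)` times the
defect of the cross-ratio relation. -/
theorem firstIntegralJ₂_eq_of_crossRatio {K : Type*} [Field K] {a b c d : K}
    (hab : b - a ≠ 0) (hbc : c - b ≠ 0) (hcd : d - c ≠ 0) (hac : c - a ≠ 0) (hbd : d - b ≠ 0)
    (hcross : (d - b) * (c - a) = 4 * ((d - c) * (b - a))) :
    firstIntegralJ₂ b c d = firstIntegralJ₂ a b c := by
  unfold firstIntegralJ₂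
  field_simp
  linear_combination ((c - b) * (a * d - b * c)) * hcross

theorem stmt_12 (u : ℤ → ℝ) (hmono : StrictMono u)
    (hscheme : ∀ m : ℤ, (u (m + 3) - u (m + 1)) * (u (m + 2) - u m)
      = 4 * ((u (m + 3) - u (m + 2)) * (u (m + 1) - u m)))
    (J₂ : ℤ → ℝ)
    (hJ₂ : ∀ m : ℤ, J₂ m = 4 * u (m + 2) / (u (m + 2) - u m)
      - u (m + 1) / (u (m + 2) - u (m + 1))
      - u (m + 1) / (u (m + 1) - u m) - 2) :
    ∀ m : ℤ, J₂ (m + 1) = J₂ m := by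
  have hJ : ∀ m, J₂ m = firstIntegralJ₂ (u m) (u (m + 1)) (u (m + 2)) := hJ₂
  have hgap : ∀ {i j : ℤ}, i < j → u j - u i ≠ 0 := fun h => sub_ne_zero.mpr (hmono h).ne'
  intro m
  rw [hJ, hJ, show m + 1 + 1 = m + 2 by ring, show m + 1 + 2 = m + 3 by ring]
  exact firstIntegralJ₂_eq_of_crossRatio (hgap (by omega)) (hgap (by omega)) (hgap (by omega))
    (hgap (by omega)) (hgap (by omega)) (hscheme m)
end

section
/- If u : ℤ → ℝ is strictly monotone and satisfies the K=4 cross-ratio scheme, then J₃(m) = 2m·(4/(u(m+2)-u(m)) - 1/(u(m+2)-u(m+1)) - 1/(u(m+1)-u(m))) + (-4/(u(m+2)-u(m)) + 3/(u(m+2)-u(m+1)) - 1/(u(m+1)-u(m))) is independent of m. -/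
lemma key13 (a b c m : ℝ) (ha : 0 < a) (hb : 0 < b) (hc : 0 < c)
    (h : (b + c) * (a + b) = 4 * (c * a)) :
    2 * (m + 1) * (4 / (b + c) - 1 / c - 1 / b) + (-4 / (b + c) + 3 / c - 1 / b)
      = 2 * m * (4 / (a + b) - 1 / b - 1 / a) + (-4 / (a + b) + 3 / b - 1 / a) := by
  have ha' := ha.ne'
  have hb' := hb.ne'
  have hc' := hc.ne'
  have hab : a + b ≠ 0 := by positivity
  have hbc : b + c ≠ 0 := by positivity
  have key : (2 * (m + 1) * (4 / (b + c) - 1 / c - 1 / b) + (-4 / (b + c) + 3 / c - 1 / b))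
      - (2 * m * (4 / (a + b) - 1 / b - 1 / a) + (-4 / (a + b) + 3 / b - 1 / a))
      = ((b + c) * (a + b) - 4 * (c * a)) * (a * b + b * c + 2 * a * c - 2 * m * (a - c) * b)
        / (a * b * c * ((a + b) * (b + c))) := by
    field_simp
    ring
  have h0 : ((b + c) * (a + b) - 4 * (c * a)) * (a * b + b * c + 2 * a * c - 2 * m * (a - c) * b)
      / (a * b * c * ((a + b) * (b + c))) = 0 := by rw [h]; ring
  rw [h0] at key
  linarith

theorem stmt_13 (u : ℤ → ℝ) (hmono : StrictMono u)
    (hscheme : ∀ m : ℤ, (u (m + 3) - u (m + 1)) * (u (m + 2) - u m)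
      = 4 * ((u (m + 3) - u (m + 2)) * (u (m + 1) - u m)))
    (J₃ : ℤ → ℝ)
    (hJ₃ : ∀ m : ℤ, J₃ m = 2 * (m : ℝ) *
        (4 / (u (m + 2) - u m) - 1 / (u (m + 2) - u (m + 1))
          - 1 / (u (m + 1) - u m))
      + (-4 / (u (m + 2) - u m) + 3 / (u (m + 2) - u (m + 1))
          - 1 / (u (m + 1) - u m))) :
    ∀ m : ℤ, J₃ (m + 1) = J₃ m := by
  intro m
  rw [hJ₃, hJ₃]
  have e1 : m + 1 + 2 = m + 3 := by ring
  have e2 : m + 1 + 1 = m + 2 := by ring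
  rw [e1, e2]
  set a : ℝ := u (m + 1) - u m with ha_def
  set b : ℝ := u (m + 2) - u (m + 1) with hb_def
  set c : ℝ := u (m + 3) - u (m + 2) with hc_def
  have ha : 0 < a := sub_pos.mpr (hmono (by omega))
  have hb : 0 < b := sub_pos.mpr (hmono (by omega))
  have hc : 0 < c := sub_pos.mpr (hmono (by omega))
  have hs := hscheme m
  have h : (b + c) * (a + b) = 4 * (c * a) := by
    rw [ha_def, hb_def, hc_def]
    linear_combination hs
  have hbc : u (m + 3) - u (m + 1) = b + c := by rw [hb_def, hc_def]; ring
  have hab : u (m + 2) - u m = a + b := by rw [ha_def, hb_def]; ring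
  rw [hbc, hab]
  push_cast
  exact key13 a b c (m : ℝ) ha hb hc h
end

section
/- For u(m) = 1/(C₁m + C₂) + C₃ with C₁ ≠ 0 and C₁m + C₂ ≠ 0 for all m, the first integral J₁(m) = 4/(u(m+2)-u(m)) - 1/(u(m+2)-u(m+1)) - 1/(u(m+1)-u(m)) is independent of m, i.e. J₁(m+1) = J₁(m) for all m. -/
theorem stmt_14 (C₁ C₂ C₃ : ℝ) (hC₁ : C₁ ≠ 0)
    (hne : ∀ m : ℤ, C₁ * (m : ℝ) + C₂ ≠ 0)
    (u : ℤ → ℝ) (hu : ∀ m : ℤ, u m = 1 / (C₁ * (m : ℝ) + C₂) + C₃)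
    (J₁ : ℤ → ℝ)
    (hJ₁ : ∀ m : ℤ, J₁ m = 4 / (u (m + 2) - u m)
      - 1 / (u (m + 2) - u (m + 1)) - 1 / (u (m + 1) - u m)) :
    ∀ m : ℤ, J₁ (m + 1) = J₁ m := by
  have key : ∀ m : ℤ, J₁ m = 2 * C₁ := by
    intro m
    have h0 := hne m
    have h1 := hne (m + 1)
    have h2 := hne (m + 2)
    push_cast at h1 h2
    have d1 : u (m + 1) - u m = -C₁ / ((C₁ * ((m : ℝ) + 1) + C₂) * (C₁ * m + C₂)) := by
      rw [hu, hu]; push_cast; field_simp; ring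
    have d2 : u (m + 2) - u (m + 1) = -C₁ / ((C₁ * ((m : ℝ) + 2) + C₂) * (C₁ * ((m : ℝ) + 1) + C₂)) := by
      rw [hu, hu]; push_cast; field_simp; ring
    have d3 : u (m + 2) - u m = -(2 * C₁) / ((C₁ * ((m : ℝ) + 2) + C₂) * (C₁ * m + C₂)) := by
      rw [hu, hu]; push_cast; field_simp; ring
    rw [hJ₁, d1, d2, d3]
    field_simp
    ring
  intro m
  rw [key, key]
end

section
/- If u : ℤ → ℝ is strictly monotone, satisfies the K=4 cross-ratio scheme, and the first integrals J₁(m) ≡ A ≠ 0 and J₂(m) ≡ B are constant, then u(m) = 1/(C₁m + C₂) + C₃ for suitable constants C₁ ≠ 0, C₂, C₃ determined by A and B. -/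
/-!
Write `J₁` and `J₂` for the two first integrals evaluated on three consecutive values
`a < b < c` of `u`. Translating `u` by `t` leaves `J₁` unchanged and turns `J₂` into
`J₂ - t * J₁`, so after translating by `B / A` we may assume `J₂ = 0`. For such a
triple the two integrals force `2 * (b - c) = A * b * c`, i.e. `1 / c = 1 / b + A / 2`:
the reciprocals of the translated sequence form an arithmetic progression of step `A / 2`.
-/

theorem eq_add_zsmul_of_forall_add_one {G : Type*} [AddCommGroup G] {f : ℤ → G} {d : G}
    (h : ∀ k, f (k + 1) = f k + d) (k : ℤ) : f k = f 0 + k • d := by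
  induction k using Int.induction_on with
  | zero => simp
  | succ n ih => rw [h, ih, add_zsmul, one_zsmul, add_assoc]
  | pred n ih =>
    have h' := h (-n - 1)
    rw [sub_add_cancel, ih] at h'
    rw [eq_sub_of_add_eq h'.symm, sub_zsmul, one_zsmul, add_sub_assoc, sub_eq_add_neg]

namespace CrossRatioScheme

noncomputable def J₁ (a b c : ℝ) : ℝ := 4 / (c - a) - 1 / (c - b) - 1 / (b - a)

noncomputable def J₂ (a b c : ℝ) : ℝ := 4 * c / (c - a) - b / (c - b) - b / (b - a) - 2

theorem J₁_sub_const (a b c t : ℝ) : J₁ (a - t) (b - t) (c - t) = J₁ a b c := by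
  simp only [J₁, sub_sub_sub_cancel_right]

theorem J₂_sub_const (a b c t : ℝ) :
    J₂ (a - t) (b - t) (c - t) = J₂ a b c - t * J₁ a b c := by
  simp only [J₂, J₁, sub_sub_sub_cancel_right]
  ring

section

variable {a b c : ℝ} (hab : a < b) (hbc : b < c)
include hab hbc

theorem two_mul_sub_eq_mul_mul_of_J {A : ℝ} (hA : A ≠ 0) (h₁ : J₁ a b c = A)
    (h₂ : J₂ a b c = 0) :
    2 * (b - c) = A * (b * c) := by
  have hba : b - a ≠ 0 := by linarith
  have hcb : c - b ≠ 0 := by linarith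
  have hca : c - a ≠ 0 := by linarith
  -- `J₂ + 2 - b * J₁` and `J₂ + 2 - c * J₁` each lose two of their three fractions
  have hb : 2 - A * b = 4 * (c - b) / (c - a) := by
    rw [← h₁, ← zero_add 2, ← h₂]; simp only [J₁, J₂]; field_simp; ring
  have hc : 2 - A * c = (c - a) / (b - a) := by
    rw [← h₁, ← zero_add 2, ← h₂]; simp only [J₁, J₂]; field_simp; ring
  have hc' : 1 - A * c = (c - b) / (b - a) := by
    rw [show 1 - A * c = (2 - A * c) - 1 by ring, hc]; field_simp; ring
  have key : (2 - A * b) * (2 - A * c) = 4 * (1 - A * c) := by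
    rw [hb, hc, hc']; field_simp
  have : A * (2 * (b - c) - A * (b * c)) = 0 := by linear_combination -key
  linear_combination (mul_eq_zero.mp this).resolve_left hA

theorem one_div_eq_one_div_add_of_J {A : ℝ} (hA : A ≠ 0) (h₁ : J₁ a b c = A)
    (h₂ : J₂ a b c = 0) : 1 / c = 1 / b + A / 2 := by
  have hT := two_mul_sub_eq_mul_mul_of_J hab hbc hA h₁ h₂
  have hb : b ≠ 0 := by rintro rfl; linarith
  have hc : c ≠ 0 := by rintro rfl; linarith
  field_simp
  linear_combination hT

end

end CrossRatioScheme

open CrossRatioScheme in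
theorem stmt_18_general (u : ℤ → ℝ) (hmono : StrictMono u)
    (A B : ℝ) (hA : A ≠ 0)
    (hJ₁ : ∀ m : ℤ, 4 / (u (m + 2) - u m) - 1 / (u (m + 2) - u (m + 1))
      - 1 / (u (m + 1) - u m) = A)
    (hJ₂ : ∀ m : ℤ, 4 * u (m + 2) / (u (m + 2) - u m)
      - u (m + 1) / (u (m + 2) - u (m + 1))
      - u (m + 1) / (u (m + 1) - u m) - 2 = B) :
    ∃ C₁ C₂ C₃ : ℝ, C₁ ≠ 0 ∧
      ∀ m : ℤ, u m = 1 / (C₁ * (m : ℝ) + C₂) + C₃ := by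
  have hu (m : ℤ) :
      J₁ (u (m - 1)) (u m) (u (m + 1)) = A ∧ J₂ (u (m - 1)) (u m) (u (m + 1)) = B := by
    have e₁ := hJ₁ (m - 1)
    have e₂ := hJ₂ (m - 1)
    rw [sub_add_cancel, show m - 1 + 2 = m + 1 by ring] at e₁ e₂
    exact ⟨e₁, e₂⟩
  set v : ℤ → ℝ := fun m => u m - B / A
  have step (m : ℤ) : 1 / v (m + 1) = 1 / v m + A / 2 := by
    refine one_div_eq_one_div_add_of_J (sub_lt_sub_right (hmono (sub_one_lt m)) _)
      (sub_lt_sub_right (hmono (lt_add_one m)) _) hA ?_ ?_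
    · rw [J₁_sub_const, (hu m).1]
    · rw [J₂_sub_const, (hu m).1, (hu m).2, div_mul_cancel₀ B hA, sub_self]
  refine ⟨A / 2, 1 / v 0, B / A, by positivity, fun m => ?_⟩
  have hm := eq_add_zsmul_of_forall_add_one (f := fun k => 1 / v k) step m
  calc u m = 1 / (1 / v m) + B / A := by simp [v]
    _ = 1 / (A / 2 * m + 1 / v 0) + B / A := by rw [hm, zsmul_eq_mul]; ring

theorem stmt_18 (u : ℤ → ℝ) (hmono : StrictMono u)
    (hscheme : ∀ m : ℤ, (u (m + 3) - u (m + 1)) * (u (m + 2) - u m)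
      = 4 * ((u (m + 3) - u (m + 2)) * (u (m + 1) - u m)))
    (A B : ℝ) (hA : A ≠ 0)
    (hJ₁ : ∀ m : ℤ, 4 / (u (m + 2) - u m) - 1 / (u (m + 2) - u (m + 1))
      - 1 / (u (m + 1) - u m) = A)
    (hJ₂ : ∀ m : ℤ, 4 * u (m + 2) / (u (m + 2) - u m)
      - u (m + 1) / (u (m + 2) - u (m + 1))
      - u (m + 1) / (u (m + 1) - u m) - 2 = B) :
    ∃ C₁ C₂ C₃ : ℝ, C₁ ≠ 0 ∧
      ∀ m : ℤ, u m = 1 / (C₁ * (m : ℝ) + C₂) + C₃ :=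
  stmt_18_general u hmono A B hA hJ₁ hJ₂
end

section
/- For any strictly monotone solution u : ℤ → ℝ of the K=4 cross-ratio scheme, the sequence w(m) = 1/(u(m+1) - u(m)) satisfies the second-order linear recurrence w(m+2) - 2w(m+1) + w(m) = constant in the sense that w(m+2) - 2w(m+1) + w(m) takes the same value for all m. -/
/-!
Writing `a, b, c` for three consecutive increments of `u`, the scheme reads
`(a + b) * (b + c) = 4 * a * c`; dividing by `a * b² * c` turns it into the same relation
`(x₀ + x₁) * (x₁ + x₂) = 4 * x₁²` for the reciprocals `x = w`. Subtracting two consecutive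
instances gives `(x₁ + x₂) * (x₃ - 3 * x₂ + 3 * x₁ - x₀) = 0`, and `x₁ + x₂ > 0`, so the third
difference of `w` vanishes.
-/

lemma inv_add_mul_inv_add_eq {K : Type*} [Field K] {a b c : K} (ha : a ≠ 0) (hb : b ≠ 0)
    (hc : c ≠ 0) (h : (a + b) * (b + c) = 4 * (a * c)) :
    (a⁻¹ + b⁻¹) * (b⁻¹ + c⁻¹) = 4 * b⁻¹ ^ 2 := by
  field_simp
  linear_combination h

lemma sub_two_mul_add_eq_of_add_mul_add_eq {K : Type*} [Field K] {x₀ x₁ x₂ x₃ : K}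
    (h₀ : (x₀ + x₁) * (x₁ + x₂) = 4 * x₁ ^ 2) (h₁ : (x₁ + x₂) * (x₂ + x₃) = 4 * x₂ ^ 2)
    (hx : x₁ + x₂ ≠ 0) :
    x₃ - 2 * x₂ + x₁ = x₂ - 2 * x₁ + x₀ :=
  mul_left_cancel₀ hx (by linear_combination h₁ - h₀)

lemma second_difference_eq_of_add_mul_add_eq {K : Type*} [Field K] {x : ℤ → K}
    (h : ∀ m, (x m + x (m + 1)) * (x (m + 1) + x (m + 2)) = 4 * x (m + 1) ^ 2)
    (hx : ∀ m, x (m + 1) + x (m + 2) ≠ 0) (m : ℤ) :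
    x (m + 2) - 2 * x (m + 1) + x m = x 2 - 2 * x 1 + x 0 := by
  have hperiodic : Function.Periodic (fun m ↦ x (m + 2) - 2 * x (m + 1) + x m) 1 := by
    intro n
    have h₁ := h (n + 1)
    dsimp only
    rw [show n + 1 + 1 = n + 2 by ring, show n + 1 + 2 = n + 3 by ring] at h₁ ⊢
    exact sub_two_mul_add_eq_of_add_mul_add_eq (h n) h₁ (hx n)
  simpa using hperiodic.int_mul_eq m

theorem stmt_19 (u : ℤ → ℝ) (hmono : StrictMono u)
    (hscheme : ∀ m : ℤ, (u (m + 3) - u (m + 1)) * (u (m + 2) - u m)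
      = 4 * ((u (m + 3) - u (m + 2)) * (u (m + 1) - u m)))
    (w : ℤ → ℝ) (hw : ∀ m : ℤ, w m = 1 / (u (m + 1) - u m)) :
    ∀ m : ℤ, w (m + 2) - 2 * w (m + 1) + w m = w 2 - 2 * w 1 + w 0 := by
  have hd : ∀ m, 0 < u (m + 1) - u m := fun m ↦ sub_pos.2 (hmono (lt_add_one m))
  have hw' : ∀ m, w m = (u (m + 1) - u m)⁻¹ := by simpa only [one_div] using hw
  have hwpos : ∀ m, 0 < w m := fun m ↦ hw' m ▸ inv_pos.2 (hd m)
  refine second_difference_eq_of_add_mul_add_eq (fun m ↦ ?_)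
    (fun m ↦ (add_pos (hwpos _) (hwpos _)).ne')
  have hd₁ := hd (m + 1)
  have hd₂ := hd (m + 2)
  rw [show m + 1 + 1 = m + 2 by ring] at hd₁
  rw [show m + 2 + 1 = m + 3 by ring] at hd₂
  rw [hw', hw', hw', show m + 1 + 1 = m + 2 by ring, show m + 2 + 1 = m + 3 by ring]
  exact inv_add_mul_inv_add_eq (hd m).ne' hd₁.ne' hd₂.ne' (by linear_combination hscheme m)
end
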